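/- Let d ≥ 2 be an integer. The function x ↦ (1 + |x| + |x|²) · K_{d/2−1}(|x|) · |x|^{1−d/2} is integrable on ℝ^d; in particular the interaction potential φ(x) = (2π)^{−d/2} · K_{d/2−1}(|x|) · |x|^{1−d/2} satisfies the admissibility condition that (|·| + |·|²)·φ(·) ∈ L¹(ℝ^d). -/

import Mathlib

open MeasureTheory

/-- The modified Bessel function of the second kind. -/
noncomputable def besselK (ν x : ℝ) : ℝ :=
  ∫ t in Set.Ioi (0:ℝ), Real.exp (-x * Real.cosh t) * Real.cosh (ν * t)

/-!
Bounding `cosh t ≥ 1/2 + eᵗ/4` in the defining integral and using `uᵃ e⁻ᵘ ≤ aᵃ` with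
`u = x eᵗ / 4`, `a = ν + 1/2`, gives `x^(ν+1/2) K_ν(x) ≤ C e^(-x/2)` for `ν ≥ 0`. In polar
coordinates `|x|ᵏ K_{d/2-1}(|x|) |x|^(1-d/2) dx` becomes `r^(d/2+k) K_{d/2-1}(r) dr` (up to the
area of the sphere), which this bound dominates by `C r^(k+1/2) e^(-r/2)`.
-/

open Set Real Module

lemma rpow_mul_exp_neg_le {a u : ℝ} (ha : 0 < a) (hu : 0 ≤ u) :
    u ^ a * exp (-u) ≤ a ^ a * exp (-a) := by
  have key : (u / a) ^ a ≤ exp (u / a - 1) ^ a :=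
    rpow_le_rpow (by positivity) (by linarith [add_one_le_exp (u / a - 1)]) ha.le
  rw [← exp_mul, div_rpow hu ha.le, div_le_iff₀ (by positivity)] at key
  have hexp : (u / a - 1) * a + -u = -a := by field_simp; ring
  calc u ^ a * exp (-u) ≤ exp ((u / a - 1) * a) * a ^ a * exp (-u) := by gcongr
    _ = a ^ a * exp (-a) := by rw [mul_comm _ (a ^ a), mul_assoc, ← exp_add, hexp]

lemma half_add_exp_div_four_le_cosh (t : ℝ) : 1 / 2 + exp t / 4 ≤ cosh t := by
  have h := one_le_cosh t
  rw [cosh_eq] at *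
  linarith [exp_pos (-t)]

lemma cosh_le_exp_of_nonneg {t : ℝ} (ht : 0 ≤ t) : cosh t ≤ exp t := by
  rw [cosh_eq]
  linarith [exp_le_exp.2 (show -t ≤ t by linarith)]

lemma rpow_mul_besselK_integrand_le {ν x t : ℝ} (hν : 0 ≤ ν) (hx : 0 < x) (ht : 0 ≤ t) :
    x ^ (ν + 1 / 2) * (exp (-x * cosh t) * cosh (ν * t)) ≤
      (4 * (ν + 1 / 2)) ^ (ν + 1 / 2) * exp (-x / 2) * exp (-(1 / 2) * t) := by
  set a := ν + 1 / 2
  set u := x * exp t / 4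
  have ha : 0 < a := by positivity
  have h_cosh : exp (-x * cosh t) ≤ exp (-x / 2) * exp (-u) := by
    rw [← exp_add, exp_le_exp]
    have := mul_le_mul_of_nonneg_left (half_add_exp_div_four_le_cosh t) hx.le
    simp only [u]
    linarith
  have h_cosh_ν : cosh (ν * t) ≤ exp (a * t) * exp (-(1 / 2) * t) := by
    rw [← exp_add, show a * t + -(1 / 2) * t = ν * t by ring]
    exact cosh_le_exp_of_nonneg (by positivity)
  have h_pow : x ^ a * exp (a * t) = 4 ^ a * u ^ a := by
    rw [div_rpow (by positivity) (by norm_num), mul_rpow hx.le (exp_pos t).le, ← exp_mul,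
      mul_comm t a]
    field_simp
  have h_max : u ^ a * exp (-u) ≤ a ^ a :=
    (rpow_mul_exp_neg_le ha (by positivity)).trans
      (mul_le_of_le_one_right (by positivity) (exp_le_one_iff.2 (by linarith)))
  calc x ^ a * (exp (-x * cosh t) * cosh (ν * t))
      ≤ x ^ a * ((exp (-x / 2) * exp (-u)) * (exp (a * t) * exp (-(1 / 2) * t))) := by
        gcongr
    _ = (x ^ a * exp (a * t)) * exp (-u) * exp (-x / 2) * exp (-(1 / 2) * t) := by ring
    _ = 4 ^ a * (u ^ a * exp (-u)) * exp (-x / 2) * exp (-(1 / 2) * t) := by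
        rw [h_pow]; ring
    _ ≤ 4 ^ a * a ^ a * exp (-x / 2) * exp (-(1 / 2) * t) := by gcongr
    _ = (4 * a) ^ a * exp (-x / 2) * exp (-(1 / 2) * t) := by
        rw [mul_rpow (by norm_num) ha.le]

lemma besselK_nonneg (ν x : ℝ) : 0 ≤ besselK ν x :=
  setIntegral_nonneg measurableSet_Ioi fun _ _ => by positivity

lemma measurable_besselK (ν : ℝ) : Measurable (besselK ν) :=
  (Continuous.stronglyMeasurable (by fun_prop : Continuous fun p : ℝ × ℝ =>
    exp (-p.1 * cosh p.2) * cosh (ν * p.2))).integral_prod_right'.measurable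

lemma rpow_mul_besselK_le {ν x : ℝ} (hν : 0 ≤ ν) (hx : 0 < x) :
    x ^ (ν + 1 / 2) * besselK ν x ≤ 2 * (4 * (ν + 1 / 2)) ^ (ν + 1 / 2) * exp (-x / 2) := by
  set C := (4 * (ν + 1 / 2)) ^ (ν + 1 / 2) * exp (-x / 2)
  have h_int : IntegrableOn (fun t => C * exp (-(1 / 2) * t)) (Ioi 0) :=
    (exp_neg_integrableOn_Ioi 0 (by norm_num)).const_mul C
  calc x ^ (ν + 1 / 2) * besselK ν x
      = ∫ t in Ioi 0, x ^ (ν + 1 / 2) * (exp (-x * cosh t) * cosh (ν * t)) :=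
        (integral_const_mul _ _).symm
    _ ≤ ∫ t in Ioi 0, C * exp (-(1 / 2) * t) :=
        integral_mono_of_nonneg (.of_forall fun _ => by positivity) h_int
          ((ae_restrict_mem measurableSet_Ioi).mono fun t ht =>
            rpow_mul_besselK_integrand_le hν hx (le_of_lt ht))
    _ = 2 * C := by
        rw [integral_const_mul, integral_exp_mul_Ioi (by norm_num)]
        norm_num; ring
    _ = 2 * (4 * (ν + 1 / 2)) ^ (ν + 1 / 2) * exp (-x / 2) := (mul_assoc _ _ _).symm

lemma integrableOn_rpow_mul_besselK {ν s : ℝ} (hν : 0 ≤ ν) (hs : ν - 1 / 2 < s) :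
    IntegrableOn (fun r => r ^ s * besselK ν r) (Ioi 0) := by
  set C := 2 * (4 * (ν + 1 / 2)) ^ (ν + 1 / 2)
  have h_dom : IntegrableOn
      (fun r => C * (r ^ (s - (ν + 1 / 2)) * exp (-(1 / 2) * r))) (Ioi 0) := by
    have h := integrableOn_rpow_mul_exp_neg_mul_rpow (s := s - (ν + 1 / 2)) (by linarith)
      one_pos (by norm_num : (0 : ℝ) < 1 / 2)
    simp only [rpow_one] at h
    exact h.const_mul C
  refine h_dom.mono' ((measurable_id.pow_const s).mul (measurable_besselK ν)).aestronglyMeasurable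
    ((ae_restrict_mem measurableSet_Ioi).mono fun r (hr : 0 < r) => ?_)
  rw [norm_of_nonneg (by have := besselK_nonneg ν r; positivity)]
  calc r ^ s * besselK ν r = r ^ (s - (ν + 1 / 2)) * (r ^ (ν + 1 / 2) * besselK ν r) := by
        rw [← mul_assoc, ← rpow_add hr, sub_add_cancel]
    _ ≤ r ^ (s - (ν + 1 / 2)) * (C * exp (-r / 2)) :=
        mul_le_mul_of_nonneg_left (rpow_mul_besselK_le hν hr) (by positivity)
    _ = C * (r ^ (s - (ν + 1 / 2)) * exp (-(1 / 2) * r)) := by ring_nf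

section Radial

variable {E : Type*} [NormedAddCommGroup E] [NormedSpace ℝ E] [FiniteDimensional ℝ E]
  [MeasurableSpace E] [BorelSpace E] (μ : Measure E) [μ.IsAddHaarMeasure]

lemma integrable_norm_pow_mul_besselK_potential (hE : 2 ≤ finrank ℝ E) (k : ℕ) :
    Integrable (fun x : E => ‖x‖ ^ k * (besselK ((finrank ℝ E : ℝ) / 2 - 1) ‖x‖ *
      ‖x‖ ^ (1 - (finrank ℝ E : ℝ) / 2))) μ := by
  have : Nontrivial E := Module.nontrivial_of_finrank_pos (R := ℝ) (by omega)
  set d := finrank ℝ E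
  have hd : (2 : ℝ) ≤ d := by exact_mod_cast hE
  rw [integrable_fun_norm_addHaar μ
    (f := fun r => r ^ k * (besselK ((d : ℝ) / 2 - 1) r * r ^ (1 - (d : ℝ) / 2)))]
  refine (integrableOn_rpow_mul_besselK (ν := d / 2 - 1) (s := d / 2 + k) (by linarith)
    (by linarith)).congr_fun (fun r (hr : 0 < r) => ?_) measurableSet_Ioi
  have h_pow : r ^ (d - 1) * r ^ k * r ^ (1 - (d : ℝ) / 2) = r ^ ((d : ℝ) / 2 + k) := by
    rw [← rpow_natCast, ← rpow_natCast, ← rpow_add hr, ← rpow_add hr,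
      Nat.cast_sub (by omega : 1 ≤ d)]
    ring_nf
  dsimp only
  rw [← h_pow, smul_eq_mul]
  ring

end Radial

theorem besselK_potential_admissible (d : ℕ) (hd : 2 ≤ d) :
    Integrable (fun x : EuclideanSpace ℝ (Fin d) =>
        (1 + ‖x‖ + ‖x‖ ^ 2) *
          (besselK ((d : ℝ) / 2 - 1) ‖x‖ * ‖x‖ ^ (1 - (d : ℝ) / 2))) volume ∧
    Integrable (fun x : EuclideanSpace ℝ (Fin d) =>
        (‖x‖ + ‖x‖ ^ 2) *
          ((2 * Real.pi) ^ (-(d : ℝ) / 2) *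
            (besselK ((d : ℝ) / 2 - 1) ‖x‖ * ‖x‖ ^ (1 - (d : ℝ) / 2)))) volume := by
  have h (k : ℕ) := integrable_norm_pow_mul_besselK_potential
    (volume : Measure (EuclideanSpace ℝ (Fin d))) (by rwa [finrank_euclideanSpace_fin]) k
  simp only [finrank_euclideanSpace_fin] at h
  refine ⟨(((h 0).add (h 1)).add (h 2)).congr (.of_forall fun x => ?_),
    (((h 1).add (h 2)).const_mul ((2 * π) ^ (-(d : ℝ) / 2))).congr (.of_forall fun x => ?_)⟩ <;>
  · simp only [Pi.add_apply, pow_zero, pow_one]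
    ring
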